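/- arXiv:1611.06569 — 5 statements merged into one kernel-verified Lean document; each statement's English description precedes it below -/
import Mathlib

section
/- Let H, K, N be pairwise permutable subgroups of a finite group G (i.e., HK = KH, HN = NH, KN = NK as sets), and suppose H is a Hall subgroup of G (i.e., |H| is coprime to its index |G : H|). Then N ∩ (HK) = (N ∩ H)(N ∩ K). -/
open Pointwise

section KMaux

variable {G : Type*} [Group G]

/-- The product of two permuting subgroups is a subgroup. -/
private def mulSubgroup (A B : Subgroup G)
    (h : (A : Set G) * (B : Set G) = (B : Set G) * (A : Set G)) : Subgroup G where
  carrier := (A : Set G) * (B : Set G)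
  one_mem' := ⟨1, A.one_mem, 1, B.one_mem, mul_one 1⟩
  mul_mem' := by
    intro x y hx hy
    have key : ((A : Set G) * B) * ((A : Set G) * B) = (A : Set G) * B := by
      calc ((A : Set G) * B) * ((A : Set G) * B)
          = (A : Set G) * ((B : Set G) * A) * B := by simp only [mul_assoc]
        _ = (A : Set G) * ((A : Set G) * B) * B := by rw [h]
        _ = ((A : Set G) * A) * ((B : Set G) * B) := by simp only [mul_assoc]
        _ = (A : Set G) * B := by rw [coe_mul_coe, coe_mul_coe]
    exact key ▸ Set.mul_mem_mul hx hy
  inv_mem' := by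
    intro x hx
    have key : ((A : Set G) * B)⁻¹ = (A : Set G) * B := by
      rw [mul_inv_rev, inv_coe_set, inv_coe_set, h]
    show x⁻¹ ∈ (A : Set G) * B
    rw [← key]
    exact Set.inv_mem_inv.mpr hx

private lemma mulSubgroup_coe (A B : Subgroup G)
    (h : (A : Set G) * (B : Set G) = (B : Set G) * (A : Set G)) :
    (mulSubgroup A B h : Set G) = (A : Set G) * (B : Set G) := rfl

private lemma card_image_quot (A B : Subgroup G) :
    Nat.card (QuotientGroup.mk '' (A : Set G) : Set (G ⧸ B)) = B.relIndex A := by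
  rw [Subgroup.relIndex, Subgroup.index, Nat.card_congr]
  refine Equiv.symm (Equiv.ofBijective
    (fun q : A ⧸ B.subgroupOf A => Quotient.liftOn' q
      (fun a => (⟨QuotientGroup.mk (a : G), Set.mem_image_of_mem _ a.2⟩ :
        (QuotientGroup.mk '' (A : Set G) : Set (G ⧸ B))))
      (fun a b hab => Subtype.ext (by
        rw [QuotientGroup.leftRel_apply] at hab
        exact (QuotientGroup.eq).mpr hab))) ⟨?_, ?_⟩)
  · intro q₁ q₂ hq
    induction q₁ using Quotient.inductionOn'
    induction q₂ using Quotient.inductionOn'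
    rename_i a b
    simp only [Quotient.liftOn'_mk'', Subtype.ext_iff] at hq
    apply Quotient.sound'
    rw [QuotientGroup.leftRel_apply]
    have : ((a : G))⁻¹ * (b : G) ∈ B := (QuotientGroup.eq).mp hq
    exact this
  · rintro ⟨x, a, ha, rfl⟩
    exact ⟨Quotient.mk'' ⟨a, ha⟩, rfl⟩

/-- The product formula `|AB| * |A ⊓ B| = |A| * |B|` for the pointwise set product of
two subgroups. -/
private lemma card_coe_mul (A B : Subgroup G) :
    Nat.card ((A : Set G) * (B : Set G) : Set G) * Nat.card (A ⊓ B : Subgroup G)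
      = Nat.card A * Nat.card B := by
  rw [Subgroup.card_mul_eq_card_subgroup_mul_card_quotient B (A : Set G), card_image_quot]
  have h1 : Nat.card (A ⊓ B : Subgroup G) = Nat.card (B.subgroupOf A) := by
    rw [← Subgroup.inf_subgroupOf_right (H := B) (K := A), inf_comm B A]
    exact Nat.card_congr (Subgroup.subgroupOfEquivOfLe inf_le_left).symm.toEquiv
  rw [h1]
  have h2 : (B.subgroupOf A).index * Nat.card (B.subgroupOf A) = Nat.card A :=
    Subgroup.index_mul_card _
  rw [mul_assoc, Subgroup.relIndex, h2, mul_comm]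

private lemma card_of_le (A M : Subgroup G) (h : A ≤ M) :
    Nat.card M = Nat.card A * A.relIndex M := by
  have h2 : (A.subgroupOf M).index * Nat.card (A.subgroupOf M) = Nat.card M :=
    Subgroup.index_mul_card _
  have h1 : Nat.card (A.subgroupOf M) = Nat.card A :=
    Nat.card_congr (Subgroup.subgroupOfEquivOfLe h).toEquiv
  rw [← h2, h1, Subgroup.relIndex, mul_comm]

end KMaux

/-- **Lemma 2.4 (Knyagina–Monakhov).** If `H`, `K`, `N` are pairwise permutable
subgroups of a finite group `G` and `H` is a Hall subgroup of `G`, then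
`N ∩ HK = (N ∩ H)(N ∩ K)`. -/
theorem inf_mul_of_hall_pairwise_permutable
    {G : Type*} [Group G] [Finite G] (H K N : Subgroup G)
    (hHK : (H : Set G) * (K : Set G) = (K : Set G) * (H : Set G))
    (hHN : (H : Set G) * (N : Set G) = (N : Set G) * (H : Set G))
    (hKN : (K : Set G) * (N : Set G) = (N : Set G) * (K : Set G))
    (hHall : (Nat.card H).Coprime H.index) :
    (N : Set G) ∩ ((H : Set G) * (K : Set G)) =
      ((N ⊓ H : Subgroup G) : Set G) * ((N ⊓ K : Subgroup G) : Set G) := by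
  classical
  set HK : Subgroup G := mulSubgroup H K hHK with hHKdef
  set HN : Subgroup G := mulSubgroup H N hHN with hHNdef
  set NK : Subgroup G := mulSubgroup N K hKN.symm with hNKdef
  have hHleHK : H ≤ HK := fun x hx => ⟨x, hx, 1, K.one_mem, mul_one x⟩
  have hKleHK : K ≤ HK := fun x hx => ⟨1, H.one_mem, x, hx, one_mul x⟩
  have hHleHN : H ≤ HN := fun x hx => ⟨x, hx, 1, N.one_mem, mul_one x⟩
  have hNleNK : N ≤ NK := fun x hx => ⟨x, hx, 1, K.one_mem, mul_one x⟩
  have hKleNK : K ≤ NK := fun x hx => ⟨1, N.one_mem, x, hx, one_mul x⟩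
  set D : Subgroup G := N ⊓ HK with hDdef
  set M : Subgroup G := HN ⊓ HK with hMdef
  set M' : Subgroup G := HK ⊓ NK with hM'def
  have hHleM : H ≤ M := le_inf hHleHN hHleHK
  have hKleM' : K ≤ M' := le_inf hKleHK hKleNK
  have hM'leHK : M' ≤ HK := inf_le_left
  -- Dedekind identities
  have hM : (H : Set G) * (D : Set G) = (M : Set G) := by
    rw [hDdef, Subgroup.mul_inf_assoc H N HK hHleHK]; rfl
  have hM' : (D : Set G) * (K : Set G) = (M' : Set G) := by
    have : D = HK ⊓ N := by rw [hDdef, inf_comm]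
    rw [this, Subgroup.inf_mul_assoc HK N K hKleHK]; rfl
  -- cardinalities
  set a := Nat.card (N ⊓ H : Subgroup G) with hadef
  set b := Nat.card (N ⊓ K : Subgroup G) with hbdef
  set c := Nat.card ((N ⊓ H) ⊓ (N ⊓ K) : Subgroup G) with hcdef
  set d := Nat.card D with hddef
  set u := H.relIndex M with hudef
  set v := K.relIndex M' with hvdef
  have hH0 : 0 < Nat.card H := Nat.card_pos
  have hK0 : 0 < Nat.card K := Nat.card_pos
  have hc0 : 0 < c := Nat.card_pos
  have hHD : H ⊓ D = H ⊓ N := by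
    rw [hDdef, inf_comm N HK, ← inf_assoc, (inf_eq_left.mpr hHleHK : H ⊓ HK = H)]
  have hDK : D ⊓ K = N ⊓ K := by
    rw [hDdef, inf_assoc, (inf_eq_right.mpr hKleHK : HK ⊓ K = K)]
  -- d = u * a
  have hd1 : d = u * a := by
    have e1 := card_coe_mul H D
    rw [hM, SetLike.coe_sort_coe, hHD, card_of_le H M hHleM, ← hudef] at e1
    have e2 : Nat.card (H ⊓ N : Subgroup G) = a := by rw [hadef, inf_comm]
    rw [e2, mul_assoc] at e1
    exact (Nat.eq_of_mul_eq_mul_left hH0 e1.symm)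
  -- d = v * b
  have hd2 : d = v * b := by
    have e1 := card_coe_mul D K
    rw [hM', SetLike.coe_sort_coe, hDK, card_of_le K M' hKleM', ← hvdef, ← hbdef, ← hddef] at e1
    have e1' : Nat.card K * (v * b) = Nat.card K * d := by
      rw [← mul_assoc, e1, mul_comm]
    exact (Nat.eq_of_mul_eq_mul_left hK0 e1').symm
  -- u divides the index of H
  have hu : u ∣ H.index := Subgroup.relIndex_dvd_index_of_le hHleM
  -- v divides |H|
  have hv : v ∣ Nat.card H := by
    have h3 : K.relIndex M' * M'.relIndex HK = K.relIndex HK :=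
      Subgroup.relIndex_mul_relIndex K M' HK hKleM' hM'leHK
    have h4 : v ∣ K.relIndex HK := ⟨M'.relIndex HK, h3.symm⟩
    have h5 : K.relIndex HK ∣ Nat.card H := by
      have e1 := card_coe_mul H K
      have e2 : Nat.card ((H : Set G) * (K : Set G) : Set G) = Nat.card HK := by
        rw [← mulSubgroup_coe H K hHK, SetLike.coe_sort_coe]
      rw [e2, card_of_le K HK hKleHK] at e1
      have e3 : Nat.card K * (K.relIndex HK * Nat.card (H ⊓ K : Subgroup G))
          = Nat.card K * Nat.card H := by
        rw [← mul_assoc, e1, mul_comm]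
      exact ⟨Nat.card (H ⊓ K : Subgroup G), (Nat.eq_of_mul_eq_mul_left hK0 e3).symm⟩
    exact h4.trans h5
  -- c divides |H| and b
  have hcH : c ∣ Nat.card H :=
    Subgroup.card_dvd_of_le (le_trans inf_le_left inf_le_right)
  have hcb : c ∣ b := Subgroup.card_dvd_of_le inf_le_right
  -- coprimality
  have huH : u.Coprime (Nat.card H) := Nat.Coprime.coprime_dvd_left hu hHall.symm
  have hcop_uv : u.Coprime v := Nat.Coprime.coprime_dvd_right hv huH
  have hcop_uc : u.Coprime c := Nat.Coprime.coprime_dvd_right hcH huH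
  -- u*c divides b
  have hub : u ∣ b := by
    have h6 : u ∣ v * b := by rw [← hd2, hd1]; exact ⟨a, rfl⟩
    exact hcop_uv.dvd_of_dvd_mul_left h6
  have hucb : u * c ∣ b := Nat.Coprime.mul_dvd_of_dvd_of_dvd hcop_uc hub hcb
  -- the target set product
  set P : Set G := ((N ⊓ H : Subgroup G) : Set G) * ((N ⊓ K : Subgroup G) : Set G) with hPdef
  have hPcard : Nat.card P * c = a * b := card_coe_mul (N ⊓ H) (N ⊓ K)
  have hdc : d * c ∣ a * b := by
    rw [hd1]
    have : (u * c) * a ∣ b * a := mul_dvd_mul_right hucb a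
    rw [mul_comm b a] at this
    calc u * a * c = u * c * a := by ring
      _ ∣ a * b := this
  have hdP : d ∣ Nat.card P := by
    rw [← hPcard] at hdc
    exact (Nat.mul_dvd_mul_iff_right hc0).mp hdc
  have h1P : (1 : G) ∈ P := ⟨1, (N ⊓ H).one_mem, 1, (N ⊓ K).one_mem, mul_one 1⟩
  haveI : Nonempty P := ⟨⟨1, h1P⟩⟩
  have hP0 : 0 < Nat.card P := Nat.card_pos
  have hdleP : d ≤ Nat.card P := Nat.le_of_dvd hP0 hdP
  -- P ⊆ D
  have hPsub : P ⊆ (D : Set G) := by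
    rintro x ⟨y, hy, z, hz, rfl⟩
    have hyD : y ∈ D := ⟨(Subgroup.mem_inf.mp hy).1, hHleHK (Subgroup.mem_inf.mp hy).2⟩
    have hzD : z ∈ D := ⟨(Subgroup.mem_inf.mp hz).1, hKleHK (Subgroup.mem_inf.mp hz).2⟩
    exact D.mul_mem hyD hzD
  -- conclude set equality
  have hcard_le : (D : Set G).ncard ≤ P.ncard := by
    rw [← Nat.card_coe_set_eq, ← Nat.card_coe_set_eq, SetLike.coe_sort_coe]
    exact hdleP
  have hfinal : P = (D : Set G) := Set.eq_of_subset_of_ncard_le hPsub hcard_le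
  calc (N : Set G) ∩ ((H : Set G) * (K : Set G)) = (D : Set G) := by
        rw [hDdef, Subgroup.coe_inf]; rfl
    _ = P := hfinal.symm
end

section
/- Let σ be a partition of the set of all primes. If A and B are normal σ-nilpotent subgroups of a finite group G, then AB is σ-nilpotent. -/
def IsSigmaPrimary {ι : Type*} (c : ℕ → ι) (G : Type*) [Group G] : Prop :=
  ∃ i : ι, ∀ p : ℕ, p.Prime → p ∣ Nat.card G → c p = i

/-- A finite group is `σ`-nilpotent iff it has a normal Hall `σ_i`-subgroup for every
class `σ_i` of the partition (equivalently, it is a direct product of `σ`-primary groups). -/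
def IsSigmaNilpotent {ι : Type*} (c : ℕ → ι) (G : Type*) [Group G] : Prop :=
  ∀ i : ι, ∃ H : Subgroup G, H.Normal ∧
    (∀ p : ℕ, p.Prime → p ∣ Nat.card H → c p = i) ∧
    (∀ p : ℕ, p.Prime → p ∣ H.index → c p ≠ i)

section Aux

variable {G : Type*} [Group G]

lemma aux_card_mul_relindex [Finite G] {H K : Subgroup G} (h : H ≤ K) :
    Nat.card H * H.relIndex K = Nat.card K := by
  have := Subgroup.card_mul_index (H.subgroupOf K)
  rwa [Nat.card_congr (Subgroup.subgroupOfEquivOfLe h).toEquiv] at this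

lemma aux_relindex_dvd_card [Finite G] (H K : Subgroup G) :
    H.relIndex K ∣ Nat.card K :=
  Dvd.intro_left _ (Subgroup.card_mul_index (H.subgroupOf K))

lemma aux_card_sup_dvd [Finite G] (H K : Subgroup G) (hH : H.Normal) :
    Nat.card ↥(H ⊔ K) ∣ Nat.card H * Nat.card K := by
  haveI := hH
  have h1 : Nat.card H * H.relIndex (H ⊔ K) = Nat.card ↥(H ⊔ K) :=
    aux_card_mul_relindex le_sup_left
  rw [← h1, Subgroup.relIndex_sup_left]
  exact mul_dvd_mul_left _ (aux_relindex_dvd_card H K)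

/-- Any `σ_i`-subgroup of `A` is contained in the normal Hall `σ_i`-subgroup of `A`. -/
lemma aux_le_of_primary {ι : Type*} (c : ℕ → ι) (i : ι) [Finite G] {A : Subgroup G}
    (HA : Subgroup ↥A) (hHAnorm : HA.Normal)
    (hidx : ∀ p : ℕ, p.Prime → p ∣ HA.index → c p ≠ i)
    {K : Subgroup G} (hKA : K ≤ A)
    (hK : ∀ p : ℕ, p.Prime → p ∣ Nat.card K → c p = i) :
    K ≤ HA.map A.subtype := by
  haveI := hHAnorm
  set K' := K.subgroupOf A with hK'
  have hcardK' : Nat.card K' = Nat.card K :=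
    Nat.card_congr (Subgroup.subgroupOfEquivOfLe hKA).toEquiv
  set φ := QuotientGroup.mk' HA with hφ
  have hM : K'.map φ = ⊥ := by
    by_contra hne
    have h1 : Nat.card (K'.map φ) ≠ 1 := fun hc => hne (Subgroup.card_eq_one.mp hc)
    obtain ⟨p, hp, hpd⟩ := Nat.exists_prime_and_dvd h1
    have hd1 : p ∣ Nat.card K' :=
      hpd.trans (Subgroup.card_dvd_of_surjective _ (φ.subgroupMap_surjective K'))
    have hd2 : p ∣ HA.index := by
      rw [Subgroup.index_eq_card]
      exact hpd.trans (Subgroup.card_subgroup_dvd_card _)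
    exact hidx p hp hd2 (hK p hp (hcardK' ▸ hd1))
  intro x hx
  have hx' : (⟨x, hKA hx⟩ : ↥A) ∈ K' := by
    rw [hK', Subgroup.mem_subgroupOf]
    exact hx
  have hmem : φ ⟨x, hKA hx⟩ ∈ K'.map φ := Subgroup.mem_map_of_mem φ hx'
  rw [hM, Subgroup.mem_bot] at hmem
  have : (⟨x, hKA hx⟩ : ↥A) ∈ HA := by
    have := (QuotientGroup.eq_one_iff (N := HA) (⟨x, hKA hx⟩ : ↥A)).mp hmem
    exact this
  exact ⟨_, this, rfl⟩

/-- The normal Hall `σ_i`-subgroup of a normal subgroup `A ⊴ G` is normal in `G`. -/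
lemma aux_map_normal {ι : Type*} (c : ℕ → ι) (i : ι) [Finite G] {A : Subgroup G}
    (hA : A.Normal) (HA : Subgroup ↥A) (hHAnorm : HA.Normal)
    (hcard : ∀ p : ℕ, p.Prime → p ∣ Nat.card HA → c p = i)
    (hidx : ∀ p : ℕ, p.Prime → p ∣ HA.index → c p ≠ i) :
    (HA.map A.subtype).Normal := by
  constructor
  intro x hx g
  set Ai := HA.map A.subtype with hAi
  have hAile : Ai ≤ A := Subgroup.map_subtype_le HA
  set K := Ai.map (MulAut.conj g).toMonoidHom with hKdef
  have hKA : K ≤ A := by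
    rintro y ⟨z, hz, rfl⟩
    exact hA.conj_mem z (hAile hz) g
  have hcardAi : Nat.card Ai = Nat.card HA :=
    (Nat.card_congr (Subgroup.equivMapOfInjective HA A.subtype A.subtype_injective).toEquiv).symm
  have hcardK : Nat.card K = Nat.card HA := by
    rw [← hcardAi]
    exact (Nat.card_congr (Subgroup.equivMapOfInjective Ai _
      (MulAut.conj g).injective).toEquiv).symm
  have hKle : K ≤ Ai :=
    aux_le_of_primary c i HA hHAnorm hidx hKA (fun p hp hd => hcard p hp (hcardK ▸ hd))
  exact hKle ⟨x, hx, rfl⟩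

end Aux

/-- The product of two normal `σ`-nilpotent subgroups of a finite group is `σ`-nilpotent. -/
theorem isSigmaNilpotent_sup_of_normal
    {ι : Type*} (c : ℕ → ι) (G : Type*) [Group G] [Finite G]
    (A B : Subgroup G) (hA : A.Normal) (hB : B.Normal)
    (hAn : IsSigmaNilpotent c A) (hBn : IsSigmaNilpotent c B) :
    IsSigmaNilpotent c ↥(A ⊔ B) := by
  intro i
  obtain ⟨HA, hHAnorm, hHAcard, hHAidx⟩ := hAn i
  obtain ⟨HB, hHBnorm, hHBcard, hHBidx⟩ := hBn i
  set Ai := HA.map A.subtype with hAidef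
  set Bi := HB.map B.subtype with hBidef
  have hAile : Ai ≤ A := Subgroup.map_subtype_le HA
  have hBile : Bi ≤ B := Subgroup.map_subtype_le HB
  have hcardAi : Nat.card Ai = Nat.card HA :=
    (Nat.card_congr (Subgroup.equivMapOfInjective HA A.subtype A.subtype_injective).toEquiv).symm
  have hcardBi : Nat.card Bi = Nat.card HB :=
    (Nat.card_congr (Subgroup.equivMapOfInjective HB B.subtype B.subtype_injective).toEquiv).symm
  have hrelAi : Ai.relIndex A = HA.index := by
    have : Ai.subgroupOf A = HA :=
      Subgroup.comap_map_eq_self_of_injective A.subtype_injective HA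
    rw [Subgroup.relIndex, this]
  have hrelBi : Bi.relIndex B = HB.index := by
    have : Bi.subgroupOf B = HB :=
      Subgroup.comap_map_eq_self_of_injective B.subtype_injective HB
    rw [Subgroup.relIndex, this]
  haveI hAiN : Ai.Normal := aux_map_normal c i hA HA hHAnorm hHAcard hHAidx
  haveI hBiN : Bi.Normal := aux_map_normal c i hB HB hHBnorm hHBcard hHBidx
  set X := Ai ⊔ Bi with hXdef
  haveI hXN : X.Normal := Subgroup.sup_normal Ai Bi
  have hXle : X ≤ A ⊔ B := sup_le (hAile.trans le_sup_left) (hBile.trans le_sup_right)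
  refine ⟨X.subgroupOf (A ⊔ B), Subgroup.normal_subgroupOf, ?_, ?_⟩
  · -- card condition
    intro p hp hd
    have hcard : Nat.card (X.subgroupOf (A ⊔ B)) = Nat.card X :=
      Nat.card_congr (Subgroup.subgroupOfEquivOfLe hXle).toEquiv
    have hdvd : Nat.card X ∣ Nat.card HA * Nat.card HB := by
      rw [← hcardAi, ← hcardBi]
      exact aux_card_sup_dvd Ai Bi hAiN
    have : p ∣ Nat.card HA * Nat.card HB := (hcard ▸ hd).trans hdvd
    rcases hp.dvd_mul.mp this with h | h
    · exact hHAcard p hp h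
    · exact hHBcard p hp h
  · -- index condition
    intro p hp hd
    have hidx_eq : (X.subgroupOf (A ⊔ B)).index = X.relIndex (A ⊔ B) := rfl
    have hABi : A ⊔ X = A ⊔ Bi := by
      rw [hXdef, ← sup_assoc, sup_of_le_left hAile]
    have e1 : X.relIndex (A ⊔ X) * (A ⊔ X).relIndex (A ⊔ B) = X.relIndex (A ⊔ B) :=
      Subgroup.relIndex_mul_relIndex _ _ _ le_sup_right
        (hABi ▸ sup_le le_sup_left (hBile.trans le_sup_right))
    have t1 : X.relIndex (A ⊔ X) = X.relIndex A := Subgroup.relIndex_sup_right A X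
    have t1dvd : X.relIndex A ∣ HA.index := by
      rw [← hrelAi]
      exact Subgroup.relIndex_dvd_of_le_left A le_sup_left
    haveI : (A ⊔ Bi).Normal := Subgroup.sup_normal A Bi
    have t2 : (A ⊔ Bi).relIndex (A ⊔ B) = (A ⊔ Bi).relIndex B := by
      have hsup : B ⊔ (A ⊔ Bi) = A ⊔ B := by
        rw [sup_comm B (A ⊔ Bi), sup_assoc, sup_of_le_right hBile]
      rw [← hsup]
      exact Subgroup.relIndex_sup_right B (A ⊔ Bi)
    have t2dvd : (A ⊔ Bi).relIndex B ∣ HB.index := by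
      rw [← hrelBi]
      exact Subgroup.relIndex_dvd_of_le_left B le_sup_right
    have hdvd : X.relIndex (A ⊔ B) ∣ HA.index * HB.index := by
      rw [← e1, t1, hABi, t2]
      exact mul_dvd_mul t1dvd t2dvd
    have : p ∣ HA.index * HB.index := (hidx_eq ▸ hd).trans hdvd
    rcases hp.dvd_mul.mp this with h | h
    · exact hHAidx p hp h
    · exact hHBidx p hp h
end

section
/- Let σ be a partition of the set of all primes, G a finite group and E a normal subgroup of G. If E·Φ(G)/Φ(G) ≅ E/(E ∩ Φ(G)) is σ-nilpotent, then E is σ-nilpotent. (In particular, if G/Φ(G) is σ-nilpotent then G is σ-nilpotent.) -/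
universe u v


open Subgroup
open scoped commutatorElement

section Helpers

variable {G : Type*} [Group G]

lemma card_comap_of_surjective {G' : Type*} [Group G'] [Finite G]
    (f : G →* G') (hf : Function.Surjective f) (S : Subgroup G') :
    Nat.card (S.comap f) = Nat.card f.ker * Nat.card S := by
  have hk : f.ker ≤ S.comap f := fun x hx => by
    simp only [Subgroup.mem_comap, MonoidHom.mem_ker.mp hx, S.one_mem]
  let g : ↥(S.comap f) →* ↥S := (f.comp (S.comap f).subtype).codRestrict S (fun x => x.2)
  have hgsurj : Function.Surjective g := by
    rintro ⟨s, hs⟩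
    obtain ⟨x, rfl⟩ := hf s
    exact ⟨⟨x, hs⟩, rfl⟩
  have hker : Nat.card g.ker = Nat.card f.ker := by
    have h1 : g.ker = f.ker.subgroupOf (S.comap f) := by
      ext x
      simp only [g, MonoidHom.mem_ker, Subgroup.mem_subgroupOf, Subtype.ext_iff]
      rfl
    rw [h1]
    exact Nat.card_congr (Subgroup.subgroupOfEquivOfLe hk).toEquiv
  calc Nat.card (S.comap f)
      = Nat.card (↥(S.comap f) ⧸ g.ker) * Nat.card g.ker :=
        Subgroup.card_eq_card_quotient_mul_card_subgroup g.ker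
    _ = Nat.card S * Nat.card f.ker := by
        rw [hker, Nat.card_congr (QuotientGroup.quotientKerEquivOfSurjective g hgsurj).toEquiv]
    _ = _ := mul_comm _ _

lemma nat_eq_one_of_no_prime {n : ℕ} (h0 : n ≠ 0) (h : ∀ p : ℕ, p.Prime → ¬ p ∣ n) : n = 1 := by
  by_contra h1
  obtain ⟨p, hp, hpd⟩ := Nat.exists_prime_and_dvd h1
  exact h p hp hpd

/-- a subgroup whose order is coprime to the index of a normal subgroup is contained in it -/
lemma le_normal_of_coprime_index [Finite G] {S K : Subgroup G} (hK : K.Normal)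
    (h : Nat.Coprime (Nat.card S) K.index) : S ≤ K := by
  have hmap : Nat.card (S.map (QuotientGroup.mk' K)) ∣ Nat.card S :=
    Subgroup.card_dvd_of_surjective _ ((QuotientGroup.mk' K).subgroupMap_surjective S)
  have hle : Nat.card (S.map (QuotientGroup.mk' K)) ∣ K.index := by
    have h2 : Nat.card (S.map (QuotientGroup.mk' K)) ∣ Nat.card (G ⧸ K) :=
      Subgroup.card_dvd_of_le le_top |>.trans (by
        simpa using (Subgroup.card_top (G := G ⧸ K)).dvd)
    rw [Subgroup.index_eq_card]
    exact h2
  have : Nat.card (S.map (QuotientGroup.mk' K)) = 1 :=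
    Nat.eq_one_of_dvd_coprimes h hmap hle
  intro s hs
  have : S.map (QuotientGroup.mk' K) = ⊥ := Subgroup.card_eq_one.mp this
  have hmem : (QuotientGroup.mk' K) s ∈ S.map (QuotientGroup.mk' K) :=
    Subgroup.mem_map_of_mem _ hs
  rw [this, Subgroup.mem_bot] at hmem
  exact (QuotientGroup.eq_one_iff s).mp hmem

end Helpers

open Subgroup MulOpposite MulAction Pointwise

section AbelianConj

variable {G : Type*} [Group G] [Finite G]

noncomputable def mkQD (N : Subgroup G) [IsMulCommutative N] [N.FiniteIndex]
    (T : N.LeftTransversal) : N.QuotientDiff :=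
  Quotient.mk'' T

lemma stabilizer_eq_of_isComplement' (N : Subgroup G) [N.Normal] [IsMulCommutative N]
    [N.FiniteIndex]
    (hco : Nat.Coprime (Nat.card N) N.index) {K : Subgroup G} (h : IsComplement' N K)
    (hT : IsComplement (K : Set G) (N : Set G)) :
    stabilizer G (mkQD N ⟨(K : Set G), hT⟩) = K := by
  set α : N.QuotientDiff := mkQD N ⟨(K : Set G), hT⟩ with hα
  have hstab : IsComplement' N (stabilizer G α) :=
    Subgroup.isComplement'_stabilizer_of_coprime hco
  have hle : K ≤ stabilizer G α := by
    intro k hk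
    rw [mem_stabilizer_iff]
    have h1 : (k • α : N.QuotientDiff) = mkQD N
        (op k⁻¹ • (⟨(K : Set G), hT⟩ : N.LeftTransversal)) := rfl
    rw [hα, h1]
    unfold mkQD
    congr 1
    apply Subtype.ext
    show op k⁻¹ • (K : Set G) = (K : Set G)
    ext x
    constructor
    · rintro ⟨y, hy, rfl⟩
      exact K.mul_mem hy (K.inv_mem hk)
    · intro hx
      exact ⟨x * k, K.mul_mem hx hk, by simp [MulOpposite.smul_eq_mul_unop]⟩
  have hcards : Nat.card (stabilizer G α) = Nat.card K := by
    have hc1 := h.card_mul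
    have hc2 := hstab.card_mul
    have hpos : 0 < Nat.card N := Nat.card_pos
    exact Nat.eq_of_mul_eq_mul_left hpos (hc2.trans hc1.symm)
  exact (Subgroup.eq_of_le_of_card_ge hle hcards.le).symm

lemma conj_of_isComplement'_of_commutative (N : Subgroup G) [N.Normal] [IsMulCommutative N]
    {K₁ K₂ : Subgroup G}
    (hco : Nat.Coprime (Nat.card N) N.index)
    (h₁ : IsComplement' N K₁) (h₂ : IsComplement' N K₂) :
    ∃ n ∈ N, K₂ = K₁.map (MulAut.conj n).toMonoidHom := by
  have hT₁ : IsComplement (K₁ : Set G) (N : Set G) := h₁.symm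
  have hT₂ : IsComplement (K₂ : Set G) (N : Set G) := h₂.symm
  set α₁ : N.QuotientDiff := mkQD N ⟨(K₁ : Set G), hT₁⟩
  set α₂ : N.QuotientDiff := mkQD N ⟨(K₂ : Set G), hT₂⟩
  obtain ⟨n, hn⟩ := Subgroup.exists_smul_eq hco α₁ α₂
  refine ⟨(n : G), n.2, ?_⟩
  have e₁ := stabilizer_eq_of_isComplement' N hco h₁ hT₁
  have e₂ := stabilizer_eq_of_isComplement' N hco h₂ hT₂
  calc K₂ = stabilizer G α₂ := e₂.symm
    _ = stabilizer G ((n : G) • α₁) := by rw [← hn]; rfl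
    _ = (stabilizer G α₁).map (MulAut.conj (n : G)).toMonoidHom :=
        MulAction.stabilizer_smul_eq_stabilizer_map_conj _ _
    _ = K₁.map (MulAut.conj (n : G)).toMonoidHom := by rw [e₁]

end AbelianConj

open Subgroup

section SolvConj

variable {G : Type*} [Group G]

lemma IsComplement'_card_right [Finite G] {N K : Subgroup G} (h : IsComplement' N K) :
    Nat.card K = N.index :=
  Nat.eq_of_mul_eq_mul_left (Nat.card_pos (α := N)) (h.card_mul.trans N.card_mul_index.symm)

lemma card_map_eq_of_ker_inf_eq_bot {G' : Type*} [Group G'] (f : G →* G') (K : Subgroup G)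
    (h : f.ker ⊓ K = ⊥) : Nat.card (K.map f) = Nat.card K := by
  have hinj : Function.Injective (f.subgroupMap K) := by
    rintro ⟨x, hx⟩ ⟨y, hy⟩ hxy
    have : f x = f y := Subtype.ext_iff.mp hxy
    have hxk : x * y⁻¹ ∈ f.ker ⊓ K :=
      ⟨by simp [MonoidHom.mem_ker, this], K.mul_mem hx (K.inv_mem hy)⟩
    rw [h, Subgroup.mem_bot] at hxk
    exact Subtype.ext (by
      show x = y
      have := mul_inv_eq_one.mp hxk
      exact this)
  exact Nat.card_congr (Equiv.ofBijective _
    ⟨hinj, f.subgroupMap_surjective K⟩).symm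

lemma map_conj_map_conj (K : Subgroup G) (a b : G) :
    (K.map (MulAut.conj b).toMonoidHom).map (MulAut.conj a).toMonoidHom
      = K.map (MulAut.conj (a * b)).toMonoidHom := by
  rw [Subgroup.map_map]
  congr 1
  ext x
  simp [mul_assoc]

lemma commutator_lt_of_solvable [Finite G] (N : Subgroup G) (hs : IsSolvable ↥N)
    (hnc : ¬ ∀ a b : ↥N, a * b = b * a) : ⊥ < ⁅N, N⁆ ∧ ⁅N, N⁆ < N := by
  have hle : ⁅N, N⁆ ≤ N := by
    rw [Subgroup.commutator_le]
    intro g₁ h₁ g₂ h₂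
    exact N.mul_mem (N.mul_mem (N.mul_mem h₁ h₂) (N.inv_mem h₁)) (N.inv_mem h₂)
  constructor
  · rw [bot_lt_iff_ne_bot]
    intro hbot
    apply hnc
    intro a b
    have : (⁅(a : G), (b : G)⁆ : G) ∈ ⁅N, N⁆ := Subgroup.commutator_mem_commutator a.2 b.2
    rw [hbot, Subgroup.mem_bot, commutatorElement_eq_one_iff_mul_comm] at this
    exact Subtype.ext this
  · rw [lt_iff_le_and_ne]
    refine ⟨hle, ?_⟩
    intro heq
    have key : ∀ n : ℕ, (derivedSeries ↥N n).map N.subtype = N := by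
      intro n
      induction n with
      | zero =>
        rw [derivedSeries_zero, ← MonoidHom.range_eq_map]
        exact N.range_subtype
      | succ n ih =>
        rw [derivedSeries_succ, Subgroup.map_commutator, ih, heq]
    obtain ⟨n, hn⟩ := hs
    have := key n
    rw [hn] at this
    simp only [Subgroup.map_bot] at this
    apply hnc
    intro a b
    have hbot : N = ⊥ := this.symm
    have ha : (a : G) = 1 := Subgroup.mem_bot.mp (hbot ▸ a.2)
    have hb : (b : G) = 1 := Subgroup.mem_bot.mp (hbot ▸ b.2)
    apply Subtype.ext
    show (a : G) * b = b * a
    rw [ha, hb]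

end SolvConj

open Subgroup MulOpposite MulAction Pointwise

section Main

lemma isComplement'_subgroupOf {G : Type*} [Group G] {N' K M : Subgroup G} [N'.Normal]
    (hdisj : N' ⊓ K = ⊥) (hsup : K ⊔ N' = M) (hKM : K ≤ M) (hN'M : N' ≤ M) :
    IsComplement' (N'.subgroupOf M) (K.subgroupOf M) := by
  refine (Subgroup.isComplement'_of_disjoint_and_mul_eq_univ ?_ ?_).symm
  · rw [disjoint_iff, eq_bot_iff]
    rintro x ⟨hxK, hxN⟩
    have h1 : (x : G) ∈ N' ⊓ K := ⟨hxN, hxK⟩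
    rw [hdisj, Subgroup.mem_bot] at h1
    exact Subgroup.mem_bot.mpr (Subtype.ext h1)
  · rw [Set.eq_univ_iff_forall]
    intro x
    have hx : (x : G) ∈ (↑(K ⊔ N') : Set G) := hsup ▸ x.2
    rw [Subgroup.mul_normal K N'] at hx
    obtain ⟨k, hk, n, hn, hkn⟩ := hx
    refine ⟨⟨k, hKM hk⟩, (by exact hk : (⟨k, hKM hk⟩ : ↥M) ∈ K.subgroupOf M),
      ⟨n, hN'M hn⟩, (by exact hn : (⟨n, hN'M hn⟩ : ↥M) ∈ N'.subgroupOf M), ?_⟩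
    exact Subtype.ext hkn


lemma conj_of_isComplement'_of_solvable (m : ℕ) :
    ∀ {G : Type u} [Group G] [Finite G] (N K₁ K₂ : Subgroup G) [N.Normal],
      Nat.card N ≤ m → IsSolvable ↥N →
      Nat.Coprime (Nat.card N) N.index →
      IsComplement' N K₁ → IsComplement' N K₂ →
      ∃ n ∈ N, K₂ = K₁.map (MulAut.conj n).toMonoidHom := by
  induction m with
  | zero =>
    intro G _ _ N K₁ K₂ _ hcard _ _ _ _
    have := Nat.card_pos (α := N)
    omega
  | succ m ih =>
    intro G _ _ N K₁ K₂ _ hcard hsolv hco h₁ h₂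
    by_cases hc : ∀ a b : ↥N, a * b = b * a
    · haveI : IsMulCommutative N := ⟨⟨hc⟩⟩
      exact conj_of_isComplement'_of_commutative N hco h₁ h₂
    obtain ⟨hbotlt, hlt⟩ := commutator_lt_of_solvable N hsolv hc
    set N' : Subgroup G := ⁅N, N⁆ with hN'def
    have hle' : N' ≤ N := hlt.le
    haveI hN'norm : N'.Normal := Subgroup.commutator_normal N N
    set π := QuotientGroup.mk' N' with hπdef
    have hπsurj : Function.Surjective π := QuotientGroup.mk'_surjective N'
    have hkerπ : π.ker = N' := QuotientGroup.ker_mk' N'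
    set Nb := N.map π with hNbdef
    set Kb₁ := K₁.map π with hKb₁def
    set Kb₂ := K₂.map π with hKb₂def
    haveI hNbn : Nb.Normal := Subgroup.Normal.map (by assumption) π hπsurj
    haveI : IsMulCommutative Nb := by
      constructor; constructor
      rintro ⟨a, ha⟩ ⟨b, hb⟩
      obtain ⟨x, hx, rfl⟩ := ha
      obtain ⟨y, hy, rfl⟩ := hb
      apply Subtype.ext
      show π x * π y = π y * π x
      rw [← map_mul, ← map_mul]
      have hmem : (x * y)⁻¹ * (y * x) ∈ N' := by
        have hcomm : (x * y)⁻¹ * (y * x) = ⁅y⁻¹, x⁻¹⁆ * 1 := by group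
        rw [hcomm, mul_one]
        exact Subgroup.commutator_mem_commutator (N.inv_mem hy) (N.inv_mem hx)
      have h1 : π ((x * y)⁻¹ * (y * x)) = 1 := by
        rw [← hkerπ] at hmem; exact hmem
      rw [map_mul, map_inv] at h1
      exact (inv_mul_eq_one.mp h1)
    have hdisj₁ : N' ⊓ K₁ = ⊥ := by
      rw [eq_bot_iff]
      exact le_trans (inf_le_inf_right K₁ hle') (disjoint_iff.mp h₁.disjoint).le
    have hdisj₂ : N' ⊓ K₂ = ⊥ := by
      rw [eq_bot_iff]
      exact le_trans (inf_le_inf_right K₂ hle') (disjoint_iff.mp h₂.disjoint).le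
    have hcK₁ : Nat.card Kb₁ = Nat.card K₁ :=
      card_map_eq_of_ker_inf_eq_bot π K₁ (by rw [hkerπ]; exact hdisj₁)
    have hcK₂ : Nat.card Kb₂ = Nat.card K₂ :=
      card_map_eq_of_ker_inf_eq_bot π K₂ (by rw [hkerπ]; exact hdisj₂)
    have hcomapN : Nb.comap π = N := by
      rw [hNbdef, Subgroup.comap_map_eq, hkerπ, sup_of_le_left hle']
    have hcN : Nat.card N = Nat.card N' * Nat.card Nb := by
      have h2 := card_comap_of_surjective π hπsurj Nb
      rw [hcomapN, hkerπ] at h2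
      exact h2
    have hcG : Nat.card G = Nat.card (G ⧸ N') * Nat.card N' :=
      Subgroup.card_eq_card_quotient_mul_card_subgroup N'
    have hposN' : 0 < Nat.card N' := Nat.card_pos
    have hNbK₁ : Nat.card Nb * Nat.card Kb₁ = Nat.card (G ⧸ N') := by
      have h3 := h₁.card_mul
      apply Nat.eq_of_mul_eq_mul_left hposN'
      rw [← mul_assoc, ← hcN, hcK₁, h3, hcG]
      ring
    have hNbK₂ : Nat.card Nb * Nat.card Kb₂ = Nat.card (G ⧸ N') := by
      have h3 := h₂.card_mul
      apply Nat.eq_of_mul_eq_mul_left hposN'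
      rw [← mul_assoc, ← hcN, hcK₂, h3, hcG]
      ring
    have hcoNK : Nat.Coprime (Nat.card N) (Nat.card K₁) := by
      rw [IsComplement'_card_right h₁]; exact hco
    have hcoNbKb : Nat.Coprime (Nat.card Nb) (Nat.card Kb₁) := by
      rw [hcK₁]
      exact Nat.Coprime.coprime_dvd_left ⟨Nat.card N', by rw [mul_comm]; exact hcN⟩ hcoNK
    have hcomp1 : IsComplement' Nb Kb₁ := Subgroup.isComplement'_of_coprime hNbK₁ hcoNbKb
    have hcomp2 : IsComplement' Nb Kb₂ := Subgroup.isComplement'_of_coprime hNbK₂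
      (by rw [hcK₂, IsComplement'_card_right h₂, ← IsComplement'_card_right h₁, ← hcK₁]
          exact hcoNbKb)
    have hcoNb : Nat.Coprime (Nat.card Nb) Nb.index := by
      rw [← IsComplement'_card_right hcomp1]; exact hcoNbKb
    haveI : Group.IsSolvable ↥N := hsolv
    have hsolvNb : IsSolvable ↥Nb := solvable_of_surjective (π.subgroupMap_surjective N)
    have hcardNb : Nat.card Nb ≤ m := by
      have h2 : 2 ≤ Nat.card N' := (Subgroup.one_lt_card_iff_ne_bot (H := N')).mpr hbotlt.ne'
      have h4 : 0 < Nat.card Nb := Nat.card_pos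
      nlinarith [hcN, hcard]
    obtain ⟨nb, hnbmem, hnb⟩ := ih Nb Kb₁ Kb₂ hcardNb hsolvNb hcoNb hcomp1 hcomp2
    obtain ⟨n, hnN, rfl⟩ := hnbmem
    set L := K₁.map (MulAut.conj n).toMonoidHom with hLdef
    have hmapL : L.map π = Kb₂ := by
      have hcomphom : π.comp (MulAut.conj n).toMonoidHom
          = ((MulAut.conj (π n)).toMonoidHom).comp π := by
        ext x; simp [MulAut.conj]
      rw [hLdef, Subgroup.map_map, hcomphom, ← Subgroup.map_map, ← hKb₁def, ← hnb]
    set M := Kb₂.comap π with hMdef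
    have hK₂M : K₂ ≤ M := fun x hx => Subgroup.mem_comap.mpr (Subgroup.mem_map_of_mem π hx)
    have hLM : L ≤ M := by
      rw [hMdef, ← hmapL]
      exact Subgroup.le_comap_map π L
    have hN'M : N' ≤ M := by
      intro x hx
      rw [hMdef, Subgroup.mem_comap]
      have h5 : π x = 1 := by rw [← hkerπ] at hx; exact hx
      rw [h5]; exact Kb₂.one_mem
    have hMsup₂ : K₂ ⊔ N' = M := by
      rw [hMdef, hKb₂def, Subgroup.comap_map_eq, hkerπ]
    have hMsupL : L ⊔ N' = M := by
      rw [hMdef, ← hmapL, Subgroup.comap_map_eq, hkerπ]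
    have hdisjL : N' ⊓ L = ⊥ := by
      rw [eq_bot_iff]
      rintro x ⟨hxN, hxL⟩
      obtain ⟨y, hy, rfl⟩ := hxL
      have hyN' : y ∈ N' := by
        have h6 := hN'norm.conj_mem _ hxN n⁻¹
        simpa [MulAut.conj_apply, mul_assoc] using h6
      have h7 : y ∈ N' ⊓ K₁ := ⟨hyN', hy⟩
      rw [hdisj₁, Subgroup.mem_bot] at h7
      subst h7
      simp
    have hcompM₂ : IsComplement' (N'.subgroupOf M) (K₂.subgroupOf M) :=
      isComplement'_subgroupOf hdisj₂ hMsup₂ hK₂M hN'M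
    have hcompML : IsComplement' (N'.subgroupOf M) (L.subgroupOf M) :=
      isComplement'_subgroupOf hdisjL hMsupL hLM hN'M
    have hsolvN' : Group.IsSolvable ↥N' :=
      solvable_of_solvable_injective (Subgroup.inclusion_injective hle')
    have hsolvNm : IsSolvable ↥(N'.subgroupOf M) := by
      haveI := hsolvN'
      have hinj : Function.Injective (Subgroup.subgroupOfEquivOfLe hN'M).toMonoidHom :=
        fun a b hab => (Subgroup.subgroupOfEquivOfLe hN'M).injective hab
      exact solvable_of_solvable_injective hinj
    have hcNm : Nat.card (N'.subgroupOf M) = Nat.card N' :=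
      Nat.card_congr (Subgroup.subgroupOfEquivOfLe hN'M).toEquiv
    have hcA : Nat.card (K₂.subgroupOf M) = Nat.card K₂ :=
      Nat.card_congr (Subgroup.subgroupOfEquivOfLe hK₂M).toEquiv
    have hcoNm : Nat.Coprime (Nat.card (N'.subgroupOf M)) (N'.subgroupOf M).index := by
      rw [← IsComplement'_card_right hcompM₂, hcNm, hcA, IsComplement'_card_right h₂]
      exact (Nat.Coprime.coprime_dvd_left ⟨Nat.card Nb, hcN⟩ hco)
    have hcardNm : Nat.card (N'.subgroupOf M) ≤ m := by
      rw [hcNm]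
      have hlee : Nat.card N' ≤ Nat.card N :=
        Nat.card_le_card_of_injective _ (Subgroup.inclusion_injective hle')
      have hltcard : Nat.card N' < Nat.card N := by
        rcases lt_or_eq_of_le hlee with h | h
        · exact h
        · exact absurd (Subgroup.eq_of_le_of_card_ge hle' h.ge) hlt.ne
      omega
    obtain ⟨u, humem, hu⟩ := ih (N'.subgroupOf M) (L.subgroupOf M) (K₂.subgroupOf M)
      hcardNm hsolvNm hcoNm hcompML hcompM₂
    have hmapA : (K₂.subgroupOf M).map M.subtype = K₂ := by
      rw [Subgroup.subgroupOf_map_subtype, inf_of_le_left hK₂M]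
    have hmapB : (L.subgroupOf M).map M.subtype = L := by
      rw [Subgroup.subgroupOf_map_subtype, inf_of_le_left hLM]
    have hpush : ((L.subgroupOf M).map (MulAut.conj u).toMonoidHom).map M.subtype
        = L.map (MulAut.conj ((u : ↥M) : G)).toMonoidHom := by
      rw [Subgroup.map_map, ← hmapB, Subgroup.map_map]
      congr 1
      ext x
      simp [MulAut.conj]
    have hKfin : K₂ = L.map (MulAut.conj ((u : ↥M) : G)).toMonoidHom := by
      rw [← hmapA, hu, hpush]
    have huN' : ((u : ↥M) : G) ∈ N' := humem
    refine ⟨((u : ↥M) : G) * n, N.mul_mem (hle' huN') hnN, ?_⟩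
    rw [← map_conj_map_conj, ← hLdef, hKfin]

end Main

open Subgroup MulAction Pointwise


section KeyHelpers

variable {G : Type*} [Group G]

lemma card_eq_card_ker_inf_mul_card_map {G' : Type*} [Group G'] [Finite G] (f : G →* G')
    (M : Subgroup G) : Nat.card M = Nat.card (f.ker ⊓ M : Subgroup G) * Nat.card (M.map f) := by
  have hker : (f.subgroupMap M).ker = (f.ker ⊓ M).subgroupOf M := by
    ext x
    simp [MonoidHom.mem_ker, Subgroup.mem_subgroupOf, Subtype.ext_iff, x.2]
  have h1 : Nat.card M = Nat.card (↥M ⧸ (f.subgroupMap M).ker) * Nat.card (f.subgroupMap M).ker :=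
    Subgroup.card_eq_card_quotient_mul_card_subgroup _
  have h2 : Nat.card (↥M ⧸ (f.subgroupMap M).ker) = Nat.card (M.map f) :=
    Nat.card_congr (QuotientGroup.quotientKerEquivOfSurjective _
      (f.subgroupMap_surjective M)).toEquiv
  have h3 : Nat.card (f.subgroupMap M).ker = Nat.card (f.ker ⊓ M : Subgroup G) := by
    rw [hker]
    exact Nat.card_congr (Subgroup.subgroupOfEquivOfLe inf_le_right).toEquiv
  rw [h1, h2, h3, mul_comm]

lemma coprime_of_colors {ι : Type*} {c : ℕ → ι} {i : ι} {a b : ℕ}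
    (ha : ∀ p : ℕ, p.Prime → p ∣ a → c p = i) (hb : ∀ p : ℕ, p.Prime → p ∣ b → c p ≠ i) :
    Nat.Coprime a b := by
  by_contra h
  obtain ⟨q, hq, hdvd⟩ := Nat.exists_prime_and_dvd h
  exact hb q hq (hdvd.trans (Nat.gcd_dvd_right a b)) (ha q hq (hdvd.trans (Nat.gcd_dvd_left a b)))

lemma mem_normalizer_of_map_conj_eq {C : Subgroup G} {h : G}
    (hmap : C.map (MulAut.conj h).toMonoidHom = C) : h ∈ normalizer (C : Set G) := by
  rw [Subgroup.mem_normalizer_iff]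
  intro x
  constructor
  · intro hx
    have : (MulAut.conj h) x ∈ C.map (MulAut.conj h).toMonoidHom := Subgroup.mem_map_of_mem _ hx
    rw [hmap] at this
    simpa [MulAut.conj_apply] using this
  · intro hx
    have : h * x * h⁻¹ ∈ C.map (MulAut.conj h).toMonoidHom := by rw [hmap]; exact hx
    obtain ⟨y, hy, hyx⟩ := this
    have : y = x := by
      have := hyx
      simp only [MulAut.conj_apply, MulEquiv.coe_toMonoidHom] at this
      exact mul_left_cancel (mul_right_cancel this)
    rwa [← this]

lemma map_conj_one (C : Subgroup G) : C.map (MulAut.conj (1 : G)).toMonoidHom = C := by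
  ext x
  simp

end KeyHelpers

lemma key_lemma {ι : Type v} (c : ℕ → ι) (i : ι) (n : ℕ) :
    ∀ {G : Type u} [Group G] [Finite G], Nat.card G ≤ n →
    ∀ (E : Subgroup G), E.Normal →
    ∀ (Hb : Subgroup (E ⧸ (frattini G).subgroupOf E)), Hb.Normal →
      (∀ p : ℕ, p.Prime → p ∣ Nat.card Hb → c p = i) →
      (∀ p : ℕ, p.Prime → p ∣ Hb.index → c p ≠ i) →
      ∃ K : Subgroup ↥E, K.Normal ∧ (∀ p : ℕ, p.Prime → p ∣ Nat.card K → c p = i) ∧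
        (∀ p : ℕ, p.Prime → p ∣ K.index → c p ≠ i) := by
  induction n with
  | zero =>
    intro G _ _ hcard _ _ _ _ _ _
    have := Nat.card_pos (α := G)
    omega
  | succ n ih =>
    intro G _ _ hcardG E hE Hb hHbN hHbcard hHbind
    set F := frattini G with hFdef
    set D := F.subgroupOf E with hDdef
    set φ := QuotientGroup.mk' D with hφdef
    have hφsurj : Function.Surjective φ := QuotientGroup.mk'_surjective D
    have hφker : φ.ker = D := QuotientGroup.ker_mk' D
    by_cases hcase : ∀ p : ℕ, p.Prime → p ∣ Nat.card D → c p = i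
    · -- Case 1 : no bad primes in D; pull back Hb directly
      refine ⟨Hb.comap φ, hHbN.comap φ, ?_, ?_⟩
      · intro p hp hpd
        have hc : Nat.card (Hb.comap φ) = Nat.card D * Nat.card Hb := by
          have := card_comap_of_surjective φ hφsurj Hb
          rwa [hφker] at this
        rw [hc] at hpd
        rcases (Nat.Prime.dvd_mul hp).mp hpd with h | h
        · exact hcase p hp h
        · exact hHbcard p hp h
      · intro p hp hpd
        rw [Subgroup.index_comap_of_surjective _ hφsurj] at hpd
        exact hHbind p hp hpd
    · -- Case 2 : a bad prime p divides |D|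
      push_neg at hcase
      obtain ⟨p, hp, hpD, hpc⟩ := hcase
      haveI hfp : Fact p.Prime := ⟨hp⟩
      -- p divides |F|
      have hDFE : D = (F ⊓ E).subgroupOf E := by
        ext x
        simp [hDdef, Subgroup.mem_subgroupOf, x.2]
      have hcardD : Nat.card D = Nat.card (F ⊓ E : Subgroup G) := by
        rw [hDFE]
        exact Nat.card_congr (Subgroup.subgroupOfEquivOfLe inf_le_right).toEquiv
      have hpF : p ∣ Nat.card F := by
        rw [hcardD] at hpD
        exact hpD.trans (Subgroup.card_dvd_of_le inf_le_left)
      -- a Sylow p-subgroup of the Frattini subgroup, normal in G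
      obtain ⟨P⟩ : Nonempty (Sylow p ↥F) := inferInstance
      set Pg := (P : Subgroup ↥F).map F.subtype with hPgdef
      have hPgF : Pg ≤ F := Subgroup.map_subtype_le _
      have hPgnorm : Pg.Normal := by
        have h1 : normalizer (Pg : Set G) ⊔ F = ⊤ := Sylow.normalizer_sup_eq_top P
        have h2 : normalizer (Pg : Set G) = ⊤ := frattini_nongenerating h1
        exact Subgroup.normalizer_eq_top_iff.mp h2
      haveI := hPgnorm
      have hcardPg : Nat.card Pg = Nat.card P :=
        card_map_eq_of_ker_inf_eq_bot F.subtype _ (by rw [Subgroup.ker_subtype, bot_inf_eq])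
      have hcardP : Nat.card P = p ^ (Nat.card F).factorization p := Sylow.card_eq_multiplicity P
      have hpPg : p ∣ Nat.card Pg := by
        rw [hcardPg, hcardP]
        refine dvd_pow_self p ?_
        have := (Nat.Prime.factorization_pos_of_dvd hp (Nat.card_pos (α := F)).ne' hpF)
        omega
      -- quotient by Pg
      set π := QuotientGroup.mk' Pg with hπdef
      have hπsurj : Function.Surjective π := QuotientGroup.mk'_surjective Pg
      have hπker : π.ker = Pg := QuotientGroup.ker_mk' Pg
      haveI : Finite (G ⧸ Pg) := Finite.of_surjective π hπsurj
      set Eb := E.map π with hEbdef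
      haveI hEbN : Eb.Normal := hE.map π hπsurj
      have hcardGq : Nat.card (G ⧸ Pg) ≤ n := by
        have h1 : Nat.card G = Nat.card (G ⧸ Pg) * Nat.card Pg :=
          Subgroup.card_eq_card_quotient_mul_card_subgroup Pg
        have h2 : 2 ≤ Nat.card Pg := le_trans hp.two_le (Nat.le_of_dvd Nat.card_pos hpPg)
        have h3 : 0 < Nat.card (G ⧸ Pg) := Nat.card_pos
        nlinarith
      -- transfer the hypothesis to the quotient
      set Db := (frattini (G ⧸ Pg)).subgroupOf Eb with hDbdef
      set ρ : ↥E →* ↥Eb := π.subgroupMap E with hρdef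
      have hρsurj : Function.Surjective ρ := π.subgroupMap_surjective E
      set ψ : ↥E →* (↥Eb ⧸ Db) := (QuotientGroup.mk' Db).comp ρ with hψdef
      have hψsurj : Function.Surjective ψ := (QuotientGroup.mk'_surjective Db).comp hρsurj
      have hψker : ∀ x ∈ D, ψ x = 1 := by
        intro x hx
        have hxF : (x : G) ∈ F := hx
        have h1 : π (x : G) ∈ frattini (G ⧸ Pg) :=
          frattini_le_comap_frattini_of_surjective hπsurj hxF
        have h2 : ρ x ∈ Db := by
          rw [hDbdef, Subgroup.mem_subgroupOf]
          exact h1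
        simp only [hψdef, MonoidHom.comp_apply]
        rwa [← QuotientGroup.eq_one_iff (ρ x)] at h2
      set Θ : (↥E ⧸ D) →* (↥Eb ⧸ Db) := QuotientGroup.lift D ψ hψker with hΘdef
      have hΘsurj : Function.Surjective Θ := by
        intro t
        obtain ⟨e, he⟩ := hψsurj t
        exact ⟨QuotientGroup.mk e, he⟩
      set Hb' := Hb.map Θ with hHb'def
      have hHb'N : Hb'.Normal := hHbN.map Θ hΘsurj
      have hHb'card : ∀ p' : ℕ, p'.Prime → p' ∣ Nat.card Hb' → c p' = i := by
        intro p' hp' hdvd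
        refine hHbcard p' hp' (hdvd.trans ?_)
        exact Subgroup.card_dvd_of_surjective (Θ.subgroupMap Hb) (Θ.subgroupMap_surjective Hb)
      have hHb'ind : ∀ p' : ℕ, p'.Prime → p' ∣ Hb'.index → c p' ≠ i := by
        intro p' hp' hdvd
        exact hHbind p' hp' (hdvd.trans (Hb.index_map_dvd hΘsurj))
      -- apply the induction hypothesis in the quotient
      obtain ⟨Kb, hKbN, hKbcard, hKbind⟩ :=
        ih hcardGq Eb hEbN Hb' hHb'N hHb'card hHb'ind
      haveI := hKbN
      -- pull everything back to G
      set Kt := Kb.map Eb.subtype with hKtdef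
      have hKtEb : Kt ≤ Eb := Subgroup.map_subtype_le _
      have hcardKt : Nat.card Kt = Nat.card Kb :=
        card_map_eq_of_ker_inf_eq_bot Eb.subtype _ (by rw [Subgroup.ker_subtype, bot_inf_eq])
      set M := (Kt.comap π) ⊓ E with hMdef
      set P₀ := Pg ⊓ E with hP₀def
      haveI hP₀norm : P₀.Normal := Subgroup.normal_inf_normal Pg E
      have hP₀M : P₀ ≤ M := by
        rintro x ⟨hxPg, hxE⟩
        refine ⟨Subgroup.mem_comap.mpr ?_, hxE⟩
        have h1 : π x = 1 := by rw [← hπker] at hxPg; exact hxPg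
        rw [h1]; exact Kt.one_mem
      have hME : M ≤ E := inf_le_right
      have hmapM : M.map π = Kt := by
        apply le_antisymm
        · rintro y ⟨x, ⟨hx1, _⟩, rfl⟩
          exact Subgroup.mem_comap.mp hx1
        · intro y hy
          obtain ⟨e, heE, rfl⟩ := hKtEb hy
          exact ⟨e, ⟨Subgroup.mem_comap.mpr hy, heE⟩, rfl⟩
      have hkerM : π.ker ⊓ M = P₀ := by
        rw [hπker]
        ext x
        simp only [hMdef, hP₀def, Subgroup.mem_inf, Subgroup.mem_comap]
        constructor
        · rintro ⟨hxPg, _, hxE⟩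
          exact ⟨hxPg, hxE⟩
        · rintro ⟨hxPg, hxE⟩
          have h1 : π x = 1 := by rw [← hπker] at hxPg; exact hxPg
          exact ⟨hxPg, by rw [h1]; exact Kt.one_mem, hxE⟩
      have hcardM : Nat.card M = Nat.card P₀ * Nat.card Kb := by
        have h1 := card_eq_card_ker_inf_mul_card_map π M
        rw [hkerM, hmapM, hcardKt] at h1
        exact h1
      -- the p-core piece
      have hcardP₀dvd : Nat.card P₀ ∣ Nat.card Pg := Subgroup.card_dvd_of_le inf_le_left
      obtain ⟨j, hj⟩ : ∃ j, Nat.card P₀ = p ^ j := by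
        obtain ⟨k, hk⟩ : ∃ k, Nat.card Pg = p ^ k := by
          refine ⟨(Nat.card F).factorization p, ?_⟩
          rw [hcardPg, hcardP]
        rw [hk] at hcardP₀dvd
        exact (Nat.dvd_prime_pow hp).mp hcardP₀dvd |>.imp (fun j h => h.2)
      have hpKb : ¬ p ∣ Nat.card Kb := fun hdvd => hpc (hKbcard p hp hdvd)
      have hcoP₀Kb : Nat.Coprime (Nat.card P₀) (Nat.card Kb) := by
        rw [hj]
        exact (Nat.Prime.coprime_iff_not_dvd hp).mpr hpKb |>.pow_left j
      -- Schur–Zassenhaus in M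
      set N₀ := P₀.subgroupOf M with hN₀def
      have hcardN₀ : Nat.card N₀ = Nat.card P₀ :=
        Nat.card_congr (Subgroup.subgroupOfEquivOfLe hP₀M).toEquiv
      have hindN₀ : N₀.index = Nat.card Kb := by
        have h1 : Nat.card N₀ * N₀.index = Nat.card M := Subgroup.card_mul_index N₀
        rw [hcardN₀, hcardM] at h1
        exact Nat.eq_of_mul_eq_mul_left Nat.card_pos h1
      have hcoN₀ : Nat.Coprime (Nat.card N₀) N₀.index := by
        rw [hcardN₀, hindN₀]; exact hcoP₀Kb
      obtain ⟨C₀, hC₀⟩ := Subgroup.exists_right_complement'_of_coprime hcoN₀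
      set C := C₀.map M.subtype with hCdef
      have hCM : C ≤ M := Subgroup.map_subtype_le _
      have hCE : C ≤ E := hCM.trans hME
      have hcardC : Nat.card C = Nat.card Kb := by
        have h1 : Nat.card C = Nat.card C₀ :=
          card_map_eq_of_ker_inf_eq_bot M.subtype _ (by rw [Subgroup.ker_subtype, bot_inf_eq])
        rw [h1, IsComplement'_card_right hC₀, hindN₀]
      -- coprimality of Kb's order and index (colors!)
      have hcoKb : Nat.Coprime (Nat.card Kb) Kb.index := coprime_of_colors hKbcard hKbind
      -- absorption : any subgroup of Eb of order dividing |Kb| is inside Kt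
      have habsorb : ∀ S : Subgroup (G ⧸ Pg), S ≤ Eb → Nat.card S = Nat.card Kb → S ≤ Kt := by
        intro S hSEb hScard
        have hS' : S.subgroupOf Eb ≤ Kb := by
          apply le_normal_of_coprime_index hKbN
          have : Nat.card (S.subgroupOf Eb) = Nat.card S :=
            Nat.card_congr (Subgroup.subgroupOfEquivOfLe hSEb).toEquiv
          rw [this, hScard]
          exact hcoKb
        intro x hx
        have h1 : (⟨x, hSEb hx⟩ : ↥Eb) ∈ S.subgroupOf Eb := hx
        exact ⟨⟨x, hSEb hx⟩, hS' h1, rfl⟩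
      -- solvability of N₀ (it is a p-group)
      have hsolvN₀ : Group.IsSolvable ↥N₀ := by
        have hpg : IsPGroup p ↥N₀ := IsPGroup.of_card (by rw [hcardN₀, hj])
        haveI : Group.IsNilpotent ↥N₀ := hpg.isNilpotent
        infer_instance
      -- disjointness of P₀ and C
      have hP₀C : P₀ ⊓ C = ⊥ := by
        rw [eq_bot_iff]
        rintro x ⟨hxP₀, hxC⟩
        obtain ⟨c₀, hc₀, rfl⟩ := hxC
        have h1 : c₀ ∈ N₀ := by rw [hN₀def, Subgroup.mem_subgroupOf]; exact hxP₀
        have h2 : c₀ ∈ N₀ ⊓ C₀ := ⟨h1, hc₀⟩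
        rw [disjoint_iff.mp hC₀.disjoint, Subgroup.mem_bot] at h2
        rw [h2]
        simp
      have hCsubOf : C.subgroupOf M = C₀ := by
        rw [hCdef, Subgroup.subgroupOf]
        exact Subgroup.comap_map_eq_self_of_injective M.subtype_injective C₀
      -- the Frattini argument
      have hconj : ∀ g : G, ∃ k : G, k ∈ M ∧
          C.map (MulAut.conj g).toMonoidHom = C.map (MulAut.conj k).toMonoidHom := by
        intro g
        set Cg := C.map (MulAut.conj g).toMonoidHom with hCgdef
        have hCgE : Cg ≤ E := by
          rintro x ⟨y, hy, rfl⟩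
          exact hE.conj_mem y (hCE hy) g
        have hkerCg : π.ker ⊓ Cg = ⊥ := by
          rw [hπker, eq_bot_iff]
          rintro x ⟨hx1, hx2⟩
          obtain ⟨y, hyC, rfl⟩ := hx2
          have hyPg : y ∈ Pg := by
            have h3 := hPgnorm.conj_mem _ hx1 g⁻¹
            simpa [MulAut.conj_apply, mul_assoc] using h3
          have h4 : y ∈ P₀ ⊓ C := ⟨⟨hyPg, hCE hyC⟩, hyC⟩
          rw [hP₀C, Subgroup.mem_bot] at h4
          rw [h4]
          simp
        have hcardCg : Nat.card Cg = Nat.card Kb := by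
          have hker0 : (MulAut.conj g).toMonoidHom.ker ⊓ C = ⊥ := by
            have h0 : ((MulAut.conj g).toMonoidHom : G →* G).ker = ⊥ :=
              ((MulAut.conj g).toMonoidHom : G →* G).ker_eq_bot_iff.mpr
                (fun a b hab => (MulAut.conj g).injective hab)
            rw [h0, bot_inf_eq]
          have h1 : Nat.card Cg = Nat.card C :=
            card_map_eq_of_ker_inf_eq_bot _ _ hker0
          rw [h1, hcardC]
        have hπCg : Cg.map π ≤ Kt := by
          apply habsorb
          · rintro y ⟨x, hx, rfl⟩
            exact Subgroup.mem_map_of_mem π (hCgE hx)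
          · exact (card_map_eq_of_ker_inf_eq_bot π Cg hkerCg).trans hcardCg
        have hCgM : Cg ≤ M := by
          intro x hx
          refine ⟨Subgroup.mem_comap.mpr (hπCg (Subgroup.mem_map_of_mem π hx)), hCgE hx⟩
        have hcardCgM : Nat.card (Cg.subgroupOf M) = Nat.card Kb := by
          rw [Nat.card_congr (Subgroup.subgroupOfEquivOfLe hCgM).toEquiv]
          exact hcardCg
        have hcomplCg : IsComplement' N₀ (Cg.subgroupOf M) := by
          apply Subgroup.isComplement'_of_coprime
          · rw [hcardCgM, hcardN₀, hcardM]
          · rw [hcardCgM, hcardN₀]; exact hcoP₀Kb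
        obtain ⟨u, humem, hu⟩ := conj_of_isComplement'_of_solvable (Nat.card N₀) N₀ C₀
          (Cg.subgroupOf M) le_rfl hsolvN₀ hcoN₀ hC₀ hcomplCg
        refine ⟨((u : ↥M) : G), (u : ↥M).2, ?_⟩
        have hmapCg : (Cg.subgroupOf M).map M.subtype = Cg := by
          rw [Subgroup.subgroupOf_map_subtype, inf_of_le_left hCgM]
        have hcomphom2 : M.subtype.comp (MulAut.conj u).toMonoidHom
            = ((MulAut.conj ((u : ↥M) : G)).toMonoidHom).comp M.subtype := by
          ext x
          simp [MulAut.conj]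
        have hpush : ((C₀.map (MulAut.conj u).toMonoidHom).map M.subtype)
            = C.map (MulAut.conj ((u : ↥M) : G)).toMonoidHom := by
          rw [Subgroup.map_map, hcomphom2, ← Subgroup.map_map, ← hCdef]
        rw [← hmapCg, hu, hpush]
      -- conclude : C is normal in G
      have hMle : M ≤ normalizer (C : Set G) ⊔ F := by
        intro x hxM
        obtain ⟨⟨a, b⟩, hab⟩ := hC₀.2 (⟨x, hxM⟩ : ↥M)
        have hx : ((a : ↥M) : G) * ((b : ↥M) : G) = x := by
          rw [← Subgroup.coe_mul]
          exact congrArg _ hab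
        rw [← hx]
        have haF : ((a : ↥M) : G) ∈ F := hPgF (((a.2 : (a : ↥M) ∈ N₀) : _).1)
        have hbC : ((b : ↥M) : G) ∈ C := ⟨(b : ↥M), b.2, rfl⟩
        exact Subgroup.mul_mem _ (Subgroup.mem_sup_right haF)
          (Subgroup.mem_sup_left (Subgroup.le_normalizer hbC))
      have hnormsup : normalizer (C : Set G) ⊔ F = ⊤ := by
        rw [eq_top_iff]
        intro g _
        obtain ⟨k, hkM, hconjeq⟩ := hconj g
        have h2 : C.map (MulAut.conj (k⁻¹ * g)).toMonoidHom = C := by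
          rw [← map_conj_map_conj C k⁻¹ g, hconjeq, map_conj_map_conj, inv_mul_cancel,
            map_conj_one]
        have h3 : k⁻¹ * g ∈ normalizer (C : Set G) := mem_normalizer_of_map_conj_eq h2
        have h4 : g = k * (k⁻¹ * g) := by group
        rw [h4]
        exact Subgroup.mul_mem _ (hMle hkM) (Subgroup.mem_sup_left h3)
      have hCnormal : C.Normal :=
        Subgroup.normalizer_eq_top_iff.mp (frattini_nongenerating hnormsup)
      haveI := hCnormal
      -- final answer
      refine ⟨C.subgroupOf E, Subgroup.normal_subgroupOf, ?_, ?_⟩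
      · intro q hq hdvd
        have h1 : Nat.card (C.subgroupOf E) = Nat.card Kb := by
          rw [Nat.card_congr (Subgroup.subgroupOfEquivOfLe hCE).toEquiv, hcardC]
        rw [h1] at hdvd
        exact hKbcard q hq hdvd
      · intro q hq hdvd
        have h1 : Nat.card (C.subgroupOf E) = Nat.card Kb := by
          rw [Nat.card_congr (Subgroup.subgroupOfEquivOfLe hCE).toEquiv, hcardC]
        have h2 : Nat.card (C.subgroupOf E) * (C.subgroupOf E).index = Nat.card E :=
          Subgroup.card_mul_index _
        have h3 : Nat.card E = Nat.card P₀ * Nat.card Eb := by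
          have h4 := card_eq_card_ker_inf_mul_card_map π E
          rw [hπker, ← hP₀def, ← hEbdef] at h4
          exact h4
        have h5 : Nat.card Eb = Nat.card Kb * Kb.index := (Subgroup.card_mul_index Kb).symm
        have h6 : (C.subgroupOf E).index = Nat.card P₀ * Kb.index := by
          have h7 : Nat.card Kb * (C.subgroupOf E).index
              = Nat.card Kb * (Nat.card P₀ * Kb.index) := by
            calc Nat.card Kb * (C.subgroupOf E).index
                = Nat.card (C.subgroupOf E) * (C.subgroupOf E).index := by rw [h1]
              _ = Nat.card E := h2
              _ = Nat.card P₀ * (Nat.card Kb * Kb.index) := by rw [h3, h5]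
              _ = Nat.card Kb * (Nat.card P₀ * Kb.index) := by ring
          exact Nat.eq_of_mul_eq_mul_left Nat.card_pos h7
        rw [h6] at hdvd
        rcases (Nat.Prime.dvd_mul hq).mp hdvd with h | h
        · have h8 : q = p := by
            rw [hj] at h
            exact (Nat.prime_dvd_prime_iff_eq hq hp).mp (hq.dvd_of_dvd_pow h)
          rw [h8]
          exact hpc
        · exact hKbind q hq h




/-- If `E` is a normal subgroup of a finite group `G` and `E/(E ∩ Φ(G))` is
`σ`-nilpotent, then `E` is `σ`-nilpotent. -/
theorem isSigmaNilpotent_of_quotient_frattini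
    {ι : Type*} (c : ℕ → ι) (G : Type*) [Group G] [Finite G]
    (E : Subgroup G) (hE : E.Normal)
    (h : IsSigmaNilpotent c (E ⧸ (frattini G).subgroupOf E)) :
    IsSigmaNilpotent c E := by
  intro i
  obtain ⟨Hb, hN, hcard, hind⟩ := h i
  exact key_lemma c i (Nat.card G) le_rfl E hE Hb hN hcard hind
end

section
/- Let σ be a partition of the set of all primes and G a finite group. If A is a σ-subnormal subgroup of G and A is a σ-Hall subgroup of G (i.e., a Hall Π-subgroup for some subset Π of the classes of σ), then A is normal in G. -/
def SigmaStep {ι : Type*} (c : ℕ → ι) {G : Type*} [Group G] (B A : Subgroup G) : Prop :=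
  B ≤ A ∧ ((B.subgroupOf A).Normal ∨
    IsSigmaPrimary c (↥A ⧸ (B.subgroupOf A).normalCore))

def IsSigmaSubnormal {ι : Type*} (c : ℕ → ι) {G : Type*} [Group G] (A : Subgroup G) : Prop :=
  ∃ (t : ℕ) (f : ℕ → Subgroup G), f 0 = A ∧ f t = ⊤ ∧
    ∀ i, i < t → SigmaStep c (f i) (f (i + 1))

/-- `A` is a `σ`-Hall subgroup of `G`: `A` is a Hall `Π`-subgroup for some set `Π`
of classes of the partition `σ`, i.e. all primes dividing `|A|` lie in classes from
`Π` and no prime dividing `|G : A|` lies in a class from `Π`. -/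
def IsSigmaHall {ι : Type*} (c : ℕ → ι) {G : Type*} [Group G] (A : Subgroup G) : Prop :=
  ∃ Pi : Set ι, (∀ p : ℕ, p.Prime → p ∣ Nat.card A → c p ∈ Pi) ∧
    (∀ p : ℕ, p.Prime → p ∣ A.index → c p ∉ Pi)

/-- Normality passes to intermediate subgroups. -/
lemma aux_normal_subgroupOf_of_le {G : Type*} [Group G] {A N C : Subgroup G}
    (hNC : N ≤ C) (h : (A.subgroupOf C).Normal) :
    (A.subgroupOf N).Normal := by
  constructor
  intro n hn g
  have := h.conj_mem ⟨(n : G), hNC n.2⟩ (by simpa [Subgroup.mem_subgroupOf] using hn)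
      ⟨(g : G), hNC g.2⟩
  simpa [Subgroup.mem_subgroupOf] using this

/-- An element of `N` whose order is a `Π`-number lies in the normal Hall-type
subgroup `A` of `N`. -/
lemma aux_mem_of_orderOf_dvd {ι : Type*} {c : ℕ → ι} {G : Type*} [Group G] [Finite G]
    {A N : Subgroup G} {Pi : Set ι}
    (hA : ∀ p : ℕ, p.Prime → p ∣ Nat.card A → c p ∈ Pi)
    (hI : ∀ p : ℕ, p.Prime → p ∣ A.index → c p ∉ Pi)
    (hAN : A ≤ N) (hnorm : (A.subgroupOf N).Normal)
    {y : G} (hy : y ∈ N) (hord : orderOf y ∣ Nat.card A) : y ∈ A := by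
  haveI := hnorm
  let q : ↥N ⧸ A.subgroupOf N := QuotientGroup.mk ⟨y, hy⟩
  have h1 : orderOf q ∣ Nat.card A := by
    have := orderOf_map_dvd (QuotientGroup.mk' (A.subgroupOf N)) (⟨y, hy⟩ : ↥N)
    rw [Subgroup.orderOf_mk] at this
    exact this.trans hord
  have h2 : orderOf q ∣ A.index := by
    have h3 := orderOf_dvd_natCard q
    have hcard : Nat.card (↥N ⧸ A.subgroupOf N) = A.relIndex N := rfl
    rw [hcard] at h3
    exact h3.trans (Subgroup.relIndex_dvd_index_of_le hAN)
  have hq : orderOf q = 1 := by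
    by_contra h
    obtain ⟨p, hp, hpd⟩ := Nat.exists_prime_and_dvd h
    exact hI p hp (hpd.trans h2) (hA p hp (hpd.trans h1))
  have hq1 : q = 1 := orderOf_eq_one_iff.mp hq
  have := (QuotientGroup.eq_one_iff _).mp hq1
  simpa [Subgroup.mem_subgroupOf] using this

/-- A `σ`-subnormal `σ`-Hall subgroup of a finite group is normal. -/
theorem normal_of_isSigmaSubnormal_isSigmaHall
    {ι : Type*} (c : ℕ → ι) {G : Type*} [Group G] [Finite G]
    (A : Subgroup G) (hsub : IsSigmaSubnormal c A) (hhall : IsSigmaHall c A) :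
    A.Normal := by
  obtain ⟨Pi, hA, hI⟩ := hhall
  obtain ⟨t, f, hf0, hft, hstep⟩ := hsub
  have key : ∀ i, i ≤ t → A ≤ f i ∧ (A.subgroupOf (f i)).Normal := by
    intro i
    induction i with
    | zero =>
      intro _
      rw [hf0]
      refine ⟨le_rfl, ?_⟩
      rw [Subgroup.subgroupOf_self]
      infer_instance
    | succ i ih =>
      intro hit
      obtain ⟨hAC, hnormC⟩ := ih (Nat.le_of_succ_le hit)
      obtain ⟨hCB, hstep'⟩ := hstep i hit
      set C := f i with hC
      set B := f (i + 1) with hB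
      have hAB : A ≤ B := hAC.trans hCB
      suffices h : ∃ N : Subgroup G, A ≤ N ∧ N ≤ C ∧
          ∀ (g : ↥B) (n : G), n ∈ N → (g : G) * n * (g : G)⁻¹ ∈ N by
        obtain ⟨N, hAN, hNC, hconj⟩ := h
        refine ⟨hAB, ?_⟩
        constructor
        intro n hn g
        rw [Subgroup.mem_subgroupOf] at hn ⊢
        have hy : (g : G) * (n : G) * (g : G)⁻¹ ∈ N := hconj g (n : G) (hAN hn)
        have hord : orderOf ((g : G) * (n : G) * (g : G)⁻¹) ∣ Nat.card A := by
          have h1 : orderOf ((g : G) * (n : G) * (g : G)⁻¹) ∣ orderOf (n : G) := by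
            have := orderOf_map_dvd (MulAut.conj (g : G)).toMonoidHom (n : G)
            simpa [MulAut.conj_apply] using this
          exact h1.trans (Subgroup.orderOf_dvd_natCard A hn)
        have := aux_mem_of_orderOf_dvd hA hI hAN
          (aux_normal_subgroupOf_of_le hNC hnormC) hy hord
        simpa using this
      rcases hstep' with hnB | hprim
      · -- C is normal in B
        refine ⟨C, hAC, le_rfl, fun g n hn => ?_⟩
        have := hnB.conj_mem ⟨n, hCB hn⟩ (by simpa [Subgroup.mem_subgroupOf] using hn) g
        simpa [Subgroup.mem_subgroupOf] using this
      · by_cases hBC : B ≤ C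
        · exact ⟨C, hAC, le_rfl, fun g n hn =>
            hBC (B.mul_mem (B.mul_mem g.2 (hCB hn)) (B.inv_mem g.2))⟩
        · -- B/normalCore is σ-primary, and C < B
          set N' := (C.subgroupOf B).normalCore with hN'
          obtain ⟨i0, hi0⟩ := hprim
          have hrel : C.relIndex B ≠ 1 := by
            rw [Ne, Subgroup.relIndex_eq_one]
            exact hBC
          obtain ⟨p0, hp0, hp0d⟩ := Nat.exists_prime_and_dvd hrel
          have hp0N : p0 ∣ Nat.card (↥B ⧸ N') := by
            have : (C.subgroupOf B).index ∣ N'.index :=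
              Subgroup.index_dvd_of_le (C.subgroupOf B).normalCore_le
            exact (hp0d.trans this : p0 ∣ N'.index)
          have hci0 : c p0 = i0 := hi0 p0 hp0 hp0N
          have hp0A : p0 ∣ A.index := by
            have h1 : C.relIndex B ∣ C.index := Subgroup.relIndex_dvd_index_of_le hCB
            have h2 : C.index ∣ A.index := Subgroup.index_dvd_of_le hAC
            exact hp0d.trans (h1.trans h2)
          have hi0Pi : i0 ∉ Pi := hci0 ▸ hI p0 hp0 hp0A
          -- A.subgroupOf B ≤ N'
          have hAN' : A.subgroupOf B ≤ N' := by
            intro x hx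
            rw [Subgroup.mem_subgroupOf] at hx
            let qx : ↥B ⧸ N' := QuotientGroup.mk x
            have h1 : orderOf qx ∣ Nat.card A := by
              have hm := orderOf_map_dvd (QuotientGroup.mk' N') x
              have hx' : orderOf x ∣ Nat.card A := by
                rw [← Subgroup.orderOf_coe]
                exact Subgroup.orderOf_dvd_natCard A hx
              exact hm.trans hx'
            have h2 : orderOf qx ∣ Nat.card (↥B ⧸ N') := orderOf_dvd_natCard qx
            have hq : orderOf qx = 1 := by
              by_contra h
              obtain ⟨p, hp, hpd⟩ := Nat.exists_prime_and_dvd h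
              have : c p = i0 := hi0 p hp (hpd.trans h2)
              exact hi0Pi (this ▸ hA p hp (hpd.trans h1))
            exact (QuotientGroup.eq_one_iff _).mp (orderOf_eq_one_iff.mp hq)
          refine ⟨N'.map B.subtype, ?_, ?_, ?_⟩
          · intro a ha
            exact ⟨⟨a, hAB ha⟩, hAN' (by rwa [Subgroup.mem_subgroupOf]), rfl⟩
          · rintro x ⟨x', hx', rfl⟩
            exact (C.subgroupOf B).normalCore_le hx'
          · rintro g n ⟨n', hn', rfl⟩
            refine ⟨g * n' * g⁻¹, (C.subgroupOf B).normalCore_normal.conj_mem n' hn' g, ?_⟩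
            simp
  obtain ⟨_, hnorm⟩ := key t le_rfl
  rw [hft] at hnorm
  constructor
  intro a ha g
  have := hnorm.conj_mem ⟨a, trivial⟩ (by simpa [Subgroup.mem_subgroupOf] using ha)
      ⟨g, trivial⟩
  simpa [Subgroup.mem_subgroupOf] using this
end

section
/- Let G be a finite group with subgroups E, H, R, N such that R and N are normal in G, R ∩ E = 1, R ∩ (HN) = R ∩ H, and both E·H·R and E·H·N are subgroups of G, with E a Hall subgroup permuting with the relevant subgroups. Then E·H·R ∩ E·H·N = E·H; in particular E·H is a subgroup of G, i.e., EH = HE. -/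
open Pointwise

section Aux

variable {G : Type*} [Group G]

/-- The image of a subgroup `A` in the coset space `G ⧸ B` has cardinality `B.relIndex A`. -/
lemma aux_card_image (A B : Subgroup G) :
    Nat.card ((QuotientGroup.mk '' (A : Set G)) : Set (G ⧸ B)) = B.relIndex A := by
  have e : (↥A ⧸ B.subgroupOf A) ≃
      ((QuotientGroup.mk '' (A : Set G)) : Set (G ⧸ B)) := by
    refine Equiv.ofBijective (fun q => Quotient.liftOn' q
      (fun a => (⟨QuotientGroup.mk (a : G), ⟨(a : G), a.2, rfl⟩⟩ :
        ((QuotientGroup.mk '' (A : Set G)) : Set (G ⧸ B)))) ?_) ⟨?_, ?_⟩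
    · intro a b hab
      have hab' : (a : G)⁻¹ * (b : G) ∈ B := by
        have := QuotientGroup.leftRel_apply.mp hab
        simpa [Subgroup.mem_subgroupOf] using this
      exact Subtype.ext ((QuotientGroup.eq).mpr hab')
    · intro q₁ q₂
      induction q₁ using Quotient.inductionOn' with
      | h a =>
      induction q₂ using Quotient.inductionOn' with
      | h b =>
      intro hab
      have : QuotientGroup.mk (a : G) = QuotientGroup.mk (b : G) := congrArg Subtype.val hab
      have hm : (a : G)⁻¹ * (b : G) ∈ B := (QuotientGroup.eq).mp this
      exact Quotient.sound' (QuotientGroup.leftRel_apply.mpr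
        (by simpa [Subgroup.mem_subgroupOf] using hm))
    · rintro ⟨x, g, hg, rfl⟩
      exact ⟨Quotient.mk'' ⟨g, hg⟩, rfl⟩
  have := Nat.card_congr e
  simpa [Subgroup.relIndex, Subgroup.index] using this.symm

/-- Product formula for cardinalities of set products of subgroups. -/
lemma aux_card_mul [Finite G] (A B : Subgroup G) :
    Nat.card ((A : Set G) * (B : Set G) : Set G) * Nat.card (A ⊓ B : Subgroup G)
      = Nat.card A * Nat.card B := by
  have h := Subgroup.card_mul_eq_card_subgroup_mul_card_quotient B (A : Set G)
  have himg : ((A : Set G).image ((↑) : G → G ⧸ B)) = (QuotientGroup.mk '' (A : Set G)) := rfl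
  rw [himg, aux_card_image] at h
  rw [h]
  have h2 : B.relIndex A * Nat.card (A ⊓ B : Subgroup G) = Nat.card A := by
    have h3 := Subgroup.index_mul_card (B.subgroupOf A)
    have h4 : Nat.card (B.subgroupOf A) = Nat.card (A ⊓ B : Subgroup G) := by
      rw [← Subgroup.inf_subgroupOf_left B A]
      exact Nat.card_congr (Subgroup.subgroupOfEquivOfLe inf_le_left).toEquiv
    rw [h4] at h3
    exact h3
  calc Nat.card B * B.relIndex A * Nat.card (A ⊓ B : Subgroup G)
      = Nat.card B * (B.relIndex A * Nat.card (A ⊓ B : Subgroup G)) := by ring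
    _ = Nat.card B * Nat.card A := by rw [h2]
    _ = Nat.card A * Nat.card B := mul_comm _ _

/-- If `B` normalizes `D` then the set underlying `D ⊔ B` is the set product `D * B`. -/
lemma aux_sup_eq_mul (D B : Subgroup G) (h : B ≤ Subgroup.normalizer (D : Set G)) :
    ((D ⊔ B : Subgroup G) : Set G) = (D : Set G) * (B : Set G) := by
  have hconj : ∀ b ∈ B, ∀ d ∈ D, b * d * b⁻¹ ∈ D := fun b hb d hd =>
    ((Subgroup.mem_normalizer_iff.mp (h hb)) d).mp hd
  rw [Subgroup.sup_eq_closure_mul]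
  refine Set.Subset.antisymm (fun x hx => ?_) Subgroup.subset_closure
  induction hx using Subgroup.closure_induction'' with
  | one => exact ⟨1, one_mem _, 1, one_mem _, mul_one 1⟩
  | mem x hx => exact hx
  | inv_mem x hx =>
    obtain ⟨d, hd, b, hb, rfl⟩ := hx
    refine ⟨b⁻¹ * d⁻¹ * b, ?_, b⁻¹, inv_mem hb, by group⟩
    have := hconj b⁻¹ (inv_mem hb) d⁻¹ (inv_mem hd)
    simpa using this
  | mul x y hx hy ihx ihy =>
    obtain ⟨d, hd, b, hb, rfl⟩ := ihx
    obtain ⟨d', hd', b', hb', rfl⟩ := ihy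
    refine ⟨d * (b * d' * b⁻¹), mul_mem hd (hconj b hb d' hd'), b * b', mul_mem hb hb', by group⟩

/-- If `S = A * B` as sets with `B ≤ S`, then `|S : B|` divides `|A|`. -/
lemma aux_relIndex_dvd [Finite G] (A B S : Subgroup G) (hB : B ≤ S)
    (hS : (S : Set G) = (A : Set G) * (B : Set G)) : B.relIndex S ∣ Nat.card A := by
  have h1 := aux_card_mul A B
  rw [← hS, SetLike.coe_sort_coe] at h1
  have h2 : B.relIndex S * Nat.card B = Nat.card S := by
    have h3 := Subgroup.index_mul_card (B.subgroupOf S)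
    have h4 : Nat.card (B.subgroupOf S) = Nat.card B :=
      Nat.card_congr (Subgroup.subgroupOfEquivOfLe hB).toEquiv
    rw [h4] at h3
    exact h3
  rw [← h2] at h1
  have hBpos : 0 < Nat.card B := Nat.card_pos
  refine ⟨Nat.card (A ⊓ B : Subgroup G), ?_⟩
  have h5 : B.relIndex S * Nat.card (A ⊓ B : Subgroup G) * Nat.card B
      = Nat.card A * Nat.card B := by
    calc B.relIndex S * Nat.card (A ⊓ B : Subgroup G) * Nat.card B
        = B.relIndex S * Nat.card B * Nat.card (A ⊓ B : Subgroup G) := by ring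
      _ = Nat.card A * Nat.card B := h1
  exact (Nat.eq_of_mul_eq_mul_right hBpos h5).symm

end Aux

/-- Let `G` be a finite group, `E` a Hall subgroup, `H ≤ G`, and `R`, `N` normal
subgroups of `G` with `R ∩ E = 1` and `R ∩ HN = R ∩ H`.  If the set products `EHR`
and `EHN` are subgroups of `G`, then `EHR ∩ EHN = EH`; in particular `EH = HE` is a
subgroup of `G`. -/
theorem inter_of_products_eq_product_of_hall
    {G : Type*} [Group G] [Finite G] (E H R N : Subgroup G)
    (hR : R.Normal) (hN : N.Normal)
    (hHall : (Nat.card E).Coprime E.index)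
    (hRE : R ⊓ E = ⊥)
    (hRHN : (R : Set G) ∩ ((H : Set G) * (N : Set G)) = ((R ⊓ H : Subgroup G) : Set G))
    (hEHR : ∃ S : Subgroup G, (S : Set G) = (E : Set G) * (H : Set G) * (R : Set G))
    (hEHN : ∃ S : Subgroup G, (S : Set G) = (E : Set G) * (H : Set G) * (N : Set G)) :
    ((E : Set G) * (H : Set G) * (R : Set G)) ∩ ((E : Set G) * (H : Set G) * (N : Set G)) =
      (E : Set G) * (H : Set G) ∧
    ∃ S : Subgroup G, (S : Set G) = (E : Set G) * (H : Set G) := by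
  haveI := hR; haveI := hN
  obtain ⟨S₁, hS₁⟩ := hEHR
  obtain ⟨S₂, hS₂⟩ := hEHN
  set B : Subgroup G := H ⊔ N with hBdef
  have hB : (B : Set G) = (H : Set G) * (N : Set G) := Subgroup.mul_normal H N
  have hS₂' : (S₂ : Set G) = (E : Set G) * (B : Set G) := by
    rw [hS₂, hB, mul_assoc]
  -- memberships
  have hES₂ : E ≤ S₂ := by
    intro e he
    rw [← SetLike.mem_coe, hS₂]
    exact ⟨e * 1, ⟨e, he, 1, one_mem _, rfl⟩, 1, one_mem _, by simp⟩
  have hHS₂ : H ≤ S₂ := by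
    intro h hh
    rw [← SetLike.mem_coe, hS₂]
    exact ⟨1 * h, ⟨1, one_mem _, h, hh, rfl⟩, 1, one_mem _, by simp⟩
  have hNS₂ : N ≤ S₂ := by
    intro n hn
    rw [← SetLike.mem_coe, hS₂]
    exact ⟨1 * 1, ⟨1, one_mem _, 1, one_mem _, rfl⟩, n, hn, by simp⟩
  have hBS₂ : B ≤ S₂ := sup_le hHS₂ hNS₂
  set D : Subgroup G := R ⊓ S₂ with hDdef
  -- B normalizes D
  have hBnorm : B ≤ Subgroup.normalizer (D : Set G) := by
    intro b hb
    rw [Subgroup.mem_normalizer_iff]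
    intro d
    have hbS : b ∈ S₂ := hBS₂ hb
    constructor
    · intro hd
      have hdR : d ∈ R := (Subgroup.mem_inf.mp hd).1
      have hdS : d ∈ S₂ := (Subgroup.mem_inf.mp hd).2
      exact Subgroup.mem_inf.mpr ⟨hR.conj_mem d hdR b,
        S₂.mul_mem (S₂.mul_mem hbS hdS) (S₂.inv_mem hbS)⟩
    · intro hd
      have hdR : b * d * b⁻¹ ∈ R := (Subgroup.mem_inf.mp hd).1
      have hdS : b * d * b⁻¹ ∈ S₂ := (Subgroup.mem_inf.mp hd).2
      have h1 : b⁻¹ * (b * d * b⁻¹) * b⁻¹⁻¹ ∈ R := hR.conj_mem _ hdR b⁻¹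
      have h2 : b⁻¹ * (b * d * b⁻¹) * b⁻¹⁻¹ ∈ S₂ :=
        S₂.mul_mem (S₂.mul_mem (S₂.inv_mem hbS) hdS) (S₂.inv_mem (S₂.inv_mem hbS))
      rw [show b⁻¹ * (b * d * b⁻¹) * b⁻¹⁻¹ = d by group] at h1 h2
      exact Subgroup.mem_inf.mpr ⟨h1, h2⟩
  -- Key step : D ≤ B
  have hDB : D ≤ B := by
    set K : Subgroup G := D ⊔ B with hKdef
    have hKset : (K : Set G) = (D : Set G) * (B : Set G) := aux_sup_eq_mul D B hBnorm
    have hBK : B ≤ K := le_sup_right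
    have hKS₂ : K ≤ S₂ := sup_le inf_le_right hBS₂
    have d1 : B.relIndex K ∣ Nat.card D := aux_relIndex_dvd D B K hBK hKset
    have d2 : B.relIndex S₂ ∣ Nat.card E := aux_relIndex_dvd E B S₂ hBS₂ hS₂'
    have d3 : B.relIndex K ∣ B.relIndex S₂ :=
      ⟨K.relIndex S₂, (Subgroup.relIndex_mul_relIndex B K S₂ hBK hKS₂).symm⟩
    have d4 : Nat.card D ∣ Nat.card R := Subgroup.card_dvd_of_le inf_le_left
    -- |R| divides the index of E
    have d5 : Nat.card R ∣ E.index := by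
      have hER : ((E ⊔ R : Subgroup G) : Set G) = (E : Set G) * (R : Set G) :=
        Subgroup.mul_normal E R
      have h1 := aux_card_mul E R
      rw [← hER, SetLike.coe_sort_coe] at h1
      have hERbot : E ⊓ R = ⊥ := by rw [inf_comm]; exact hRE
      rw [hERbot, Subgroup.card_bot, mul_one] at h1
      have h6 : Nat.card (E ⊔ R : Subgroup G) ∣ Nat.card G :=
        Subgroup.card_subgroup_dvd_card _
      rw [h1, ← Subgroup.card_mul_index E] at h6
      have hEpos : Nat.card E ≠ 0 := Nat.card_pos.ne'
      exact (mul_dvd_mul_iff_left hEpos).mp h6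
    have hcop : (Nat.card E).Coprime (Nat.card R) := hHall.coprime_dvd_right d5
    have haE : B.relIndex K ∣ Nat.card E := d3.trans d2
    have haR : B.relIndex K ∣ Nat.card R := d1.trans d4
    have ha1 : B.relIndex K = 1 :=
      Nat.dvd_one.mp (hcop ▸ Nat.dvd_gcd haE haR)
    have hKB : K ≤ B := Subgroup.relIndex_eq_one.mp ha1
    exact le_sup_left.trans hKB
  -- Main set equality
  have hmain : ((E : Set G) * (H : Set G) * (R : Set G)) ∩
      ((E : Set G) * (H : Set G) * (N : Set G)) = (E : Set G) * (H : Set G) := by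
    apply Set.Subset.antisymm
    · rintro x ⟨hx1, hx2⟩
      obtain ⟨y, ⟨e, he, h', hh', rfl⟩, r, hr, rfl⟩ := hx1
      have hxS₂ : e * h' * r ∈ S₂ := by
        rw [← SetLike.mem_coe, hS₂]; exact hx2
      have hrS₂ : r ∈ S₂ := by
        have := mul_mem (mul_mem (inv_mem (hHS₂ hh')) (inv_mem (hES₂ he))) hxS₂
        rwa [show h'⁻¹ * e⁻¹ * (e * h' * r) = r by group] at this
      have hrD : r ∈ D := ⟨hr, hrS₂⟩
      have hrB : r ∈ B := hDB hrD
      have hrH : r ∈ H := by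
        have : r ∈ (R : Set G) ∩ ((H : Set G) * (N : Set G)) := by
          constructor
          · exact hr
          · rw [← hB]; exact hrB
        rw [hRHN] at this
        exact (Subgroup.mem_inf.mp this).2
      exact ⟨e, he, h' * r, mul_mem hh' hrH, by group⟩
    · rintro x ⟨e, he, h', hh', rfl⟩
      constructor
      · exact ⟨e * h', ⟨e, he, h', hh', rfl⟩, 1, one_mem _, mul_one _⟩
      · exact ⟨e * h', ⟨e, he, h', hh', rfl⟩, 1, one_mem _, mul_one _⟩
  refine ⟨hmain, ⟨S₁ ⊓ S₂, ?_⟩⟩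
  rw [Subgroup.coe_inf, hS₁, hS₂]
  exact hmain
end
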